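/- Let (M,g,J) be an almost product singular semi-Riemannian manifold and K̃ the almost product Koszul form. Then for all smooth vector fields X,Y,Z on M and all f ∈ C^∞(M): (1) K̃ is additive and ℝ-linear in each of its three arguments; (2) K̃(fX,Y,Z) = f·K̃(X,Y,Z); (3) K̃(X,fY,Z) = f·K̃(X,Y,Z) + X(f)⟨Y,Z⟩; (4) K̃(X,Y,fZ) = f·K̃(X,Y,Z); (5) K̃(X,Y,Z) + K̃(X,Z,Y) = X⟨Y,Z⟩; (6) K̃(X,Y,Z) − K̃(Y,X,Z) = (1/2)⟨[X,Y],Z⟩ + (1/2)[K(X,JY,JZ) − K(Y,JX,JZ)]; (7) K̃(X,JY,JZ) = K̃(X,Y,Z). -/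

import Mathlib

noncomputable section

/-!
An algebraic (Koszul-style) model of singular semi-Riemannian manifolds, following
Stoica's "singular semi-Riemannian geometry".

* `M` is the set of points of the smooth manifold;
* `T p` is the tangent space at `p : M`;
* `IsFn h` says that `h : M → ℝ` is a smooth function, i.e. `h ∈ C^∞(M)`;
* `IsVF X` says that the section `X : ∀ p, T p` of the tangent bundle is a smooth
  vector field, i.e. `X ∈ Γ(TM)`;
* `D X h` is the derivative `X(h)` of the smooth function `h` along `X`;
* `bracket X Y` is the Lie bracket `[X,Y]` of vector fields;
* `g` is the metric: a smooth symmetric bilinear form on the tangent bundle, which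
  may be degenerate and of variable signature.
-/
structure SSRM (M : Type*) (T : M → Type*)
    [∀ p, AddCommGroup (T p)] [∀ p, Module ℝ (T p)] where
  /-- the smooth real functions `C^∞(M)` -/
  IsFn : (M → ℝ) → Prop
  /-- the smooth vector fields `Γ(TM)` -/
  IsVF : (∀ p, T p) → Prop
  /-- the directional derivative `X(h)` of a function along a vector field -/
  D : (∀ p, T p) → (M → ℝ) → M → ℝ
  /-- the Lie bracket of vector fields -/
  bracket : (∀ p, T p) → (∀ p, T p) → ∀ p, T p
  /-- the (possibly degenerate) metric, pointwise a bilinear form -/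
  g : ∀ p, T p →ₗ[ℝ] T p →ₗ[ℝ] ℝ
  g_symm : ∀ p u v, g p u v = g p v u
  fn_const : ∀ c : ℝ, IsFn fun _ => c
  fn_add : ∀ a b, IsFn a → IsFn b → IsFn (a + b)
  fn_mul : ∀ a b, IsFn a → IsFn b → IsFn (a * b)
  vf_add : ∀ X Y, IsVF X → IsVF Y → IsVF (X + Y)
  vf_smul : ∀ a X, IsFn a → IsVF X → IsVF fun p => a p • X p
  vf_smulR : ∀ (r : ℝ) X, IsVF X → IsVF (r • X)
  g_smooth : ∀ X Y, IsVF X → IsVF Y → IsFn fun p => g p (X p) (Y p)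
  D_smooth : ∀ X a, IsVF X → IsFn a → IsFn (D X a)
  D_add_fn : ∀ X a b, IsVF X → IsFn a → IsFn b → D X (a + b) = D X a + D X b
  D_mul_fn : ∀ X a b, IsVF X → IsFn a → IsFn b → D X (a * b) = D X a * b + a * D X b
  D_const : ∀ X (c : ℝ), IsVF X → D X (fun _ => c) = 0
  D_add_vf : ∀ X Y a, IsVF X → IsVF Y → IsFn a → D (X + Y) a = D X a + D Y a
  D_smul_vf : ∀ b X a, IsFn b → IsVF X → IsFn a →
    D (fun p => b p • X p) a = b * D X a
  bracket_smooth : ∀ X Y, IsVF X → IsVF Y → IsVF (bracket X Y)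
  bracket_antisymm : ∀ X Y, IsVF X → IsVF Y → bracket X Y = -bracket Y X
  bracket_add_left : ∀ X Y Z, IsVF X → IsVF Y → IsVF Z →
    bracket (X + Y) Z = bracket X Z + bracket Y Z
  bracket_leibniz : ∀ X a Y, IsVF X → IsFn a → IsVF Y →
    bracket X (fun p => a p • Y p)
      = (fun p => a p • bracket X Y p) + (fun p => D X a p • Y p)
  D_bracket : ∀ X Y a, IsVF X → IsVF Y → IsFn a →
    D (bracket X Y) a = D X (D Y a) - D Y (D X a)

namespace SSRM

variable {M : Type*} {T : M → Type*} [∀ p, AddCommGroup (T p)] [∀ p, Module ℝ (T p)]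

/-- `⟨X,Y⟩ = g(X,Y)`, as a function on `M`. -/
def gf (S : SSRM M T) (X Y : ∀ p, T p) : M → ℝ := fun p => S.g p (X p) (Y p)

/-- The Koszul form
`K(X,Y,Z) = (1/2){X⟨Y,Z⟩ + Y⟨Z,X⟩ − Z⟨X,Y⟩ − ⟨X,[Y,Z]⟩ + ⟨Y,[Z,X]⟩ + ⟨Z,[X,Y]⟩}`. -/
def K (S : SSRM M T) (X Y Z : ∀ p, T p) : M → ℝ :=
  ((1 : ℝ) / 2) • (S.D X (S.gf Y Z) + S.D Y (S.gf Z X) - S.D Z (S.gf X Y)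
    - S.gf X (S.bracket Y Z) + S.gf Y (S.bracket Z X) + S.gf Z (S.bracket X Y))

/-- The semi-symmetric metric Koszul form (w.r.t. the vector field `P`):
`K̄(X,Y,Z) = K(X,Y,Z) + g(Y,P)g(X,Z) − g(X,Y)g(P,Z)`. -/
def Kbar (S : SSRM M T) (P X Y Z : ∀ p, T p) : M → ℝ :=
  S.K X Y Z + S.gf Y P * S.gf X Z - S.gf X Y * S.gf P Z

/-- The semi-symmetric non-metric Koszul form (w.r.t. the vector field `P`):
`K̂(X,Y,Z) = K(X,Y,Z) + g(Y,P)g(X,Z)`. -/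
def Khat (S : SSRM M T) (P X Y Z : ∀ p, T p) : M → ℝ :=
  S.K X Y Z + S.gf Y P * S.gf X Z

/-- The Lie derivative of the metric:
`(L_Y g)(Z,X) = Y(g(Z,X)) − g([Y,Z],X) − g(Z,[Y,X])`. -/
def lieD (S : SSRM M T) (Y Z X : ∀ p, T p) : M → ℝ :=
  S.D Y (S.gf Z X) - S.gf (S.bracket Y Z) X - S.gf Z (S.bracket Y X)

/-- `W ∈ Γ₀(TM)`: a smooth vector field with `g(W,Y) = 0` for every vector field `Y`. -/
def Gamma0 (S : SSRM M T) (W : ∀ p, T p) : Prop :=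
  S.IsVF W ∧ ∀ Y, S.IsVF Y → S.gf W Y = 0

/-- A 1-form `ω` (given by its action `ω(Z)` on vector fields) belongs to `A^•(M)`:
at every point `p` the covector `ω_p` lies in the image of the flat map
`v ↦ g_p(v,·) : T_pM → T_p*M`. -/
def MemAsup (S : SSRM M T) (ω : (∀ p, T p) → M → ℝ) : Prop :=
  ∀ p : M, ∃ v : T p, ∀ Z, S.IsVF Z → ω Z p = S.g p v (Z p)

/-- `(M,g)` is radical-stationary: `K(X,Y,·) ∈ A^•(M)` for all vector fields `X,Y`. -/
def RadicalStationary (S : SSRM M T) : Prop :=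
  ∀ X Y, S.IsVF X → S.IsVF Y → S.MemAsup fun Z => S.K X Y Z

/-- `Y^♭ = g(Y,·)`, as a 1-form. -/
def flat (S : SSRM M T) (Y : ∀ p, T p) : (∀ p, T p) → M → ℝ := fun Z => S.gf Y Z

/-- The semi-symmetric metric lower covariant derivative: `∇̄♭_X Y = K̄(X,Y,·)`. -/
def nablaFlatBar (S : SSRM M T) (P X Y : ∀ p, T p) : (∀ p, T p) → M → ℝ :=
  fun Z => S.Kbar P X Y Z

/-- The semi-symmetric non-metric lower covariant derivative: `∇̂♭_X Y = K̂(X,Y,·)`. -/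
def nablaFlatHat (S : SSRM M T) (P X Y : ∀ p, T p) : (∀ p, T p) → M → ℝ :=
  fun Z => S.Khat P X Y Z

/-- Pointwise application of a bundle map `J : TM → TM` to a vector field. -/
def Jv (J : ∀ p, T p →ₗ[ℝ] T p) (X : ∀ p, T p) : ∀ p, T p := fun p => J p (X p)

/-- `J` is an almost product structure on `(M,g)`: a smooth bundle map `J : TM → TM`
with `J² = id` and `g(JX,JY) = g(X,Y)`. -/
structure IsAlmostProduct (S : SSRM M T) (J : ∀ p, T p →ₗ[ℝ] T p) : Prop where
  invol : ∀ p v, J p (J p v) = v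
  compat : ∀ p u v, S.g p (J p u) (J p v) = S.g p u v
  smooth : ∀ X, S.IsVF X → S.IsVF (Jv J X)

/-- The almost product Koszul form `K̃(X,Y,Z) = (1/2)[K(X,Y,Z) + K(X,JY,JZ)]`. -/
def Ktilde (S : SSRM M T) (J : ∀ p, T p →ₗ[ℝ] T p) (X Y Z : ∀ p, T p) : M → ℝ :=
  ((1 : ℝ) / 2) • (S.K X Y Z + S.K X (Jv J Y) (Jv J Z))

/-- The almost product lower covariant derivative: `∇̃♭_X Y = K̃(X,Y,·)`. -/
def nablaFlatTilde (S : SSRM M T) (J : ∀ p, T p →ₗ[ℝ] T p) (X Y : ∀ p, T p) :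
    (∀ p, T p) → M → ℝ :=
  fun Z => S.Ktilde J X Y Z

end SSRM

/-! The almost product Koszul form is the average of `K(X,·,·)` and its conjugate
`K(X,J·,J·)`. Since `J` is pointwise linear, involutive and `g`-orthogonal, each property of
`K` passes to `K̃`. For `K` itself only the first slot is computed by hand: the identities
`K(X,Y,Z) + K(X,Z,Y) = X⟨Y,Z⟩` (metric) and `K(X,Y,Z) − K(Y,X,Z) = ⟨[X,Y],Z⟩`
(torsion-free) then move additivity and the Leibniz rule to the second and third slots. -/

namespace SSRM

variable {M : Type*} {T : M → Type*} [∀ p, AddCommGroup (T p)] [∀ p, Module ℝ (T p)]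
  (S : SSRM M T)

lemma gf_comm (X Y : ∀ p, T p) : S.gf X Y = S.gf Y X :=
  funext fun p => S.g_symm p _ _

lemma isFn_gf {X Y : ∀ p, T p} (hX : S.IsVF X) (hY : S.IsVF Y) : S.IsFn (S.gf X Y) :=
  S.g_smooth X Y hX hY

lemma gf_add_left (X X' Y : ∀ p, T p) : S.gf (X + X') Y = S.gf X Y + S.gf X' Y := by
  ext p; simp [gf]

lemma gf_add_right (X Y Y' : ∀ p, T p) : S.gf X (Y + Y') = S.gf X Y + S.gf X Y' := by
  ext p; simp [gf]

lemma gf_fsmul_left (f : M → ℝ) (X Y : ∀ p, T p) :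
    S.gf (fun p => f p • X p) Y = f * S.gf X Y := by
  ext p; simp [gf]

lemma gf_fsmul_right (f : M → ℝ) (X Y : ∀ p, T p) :
    S.gf X (fun p => f p • Y p) = f * S.gf X Y := by
  ext p; simp [gf]

variable {X X' Y Y' Z Z' : ∀ p, T p} {f : M → ℝ}

lemma bracket_add_right (hX : S.IsVF X) (hY : S.IsVF Y) (hY' : S.IsVF Y') :
    S.bracket X (Y + Y') = S.bracket X Y + S.bracket X Y' := by
  rw [S.bracket_antisymm X _ hX (S.vf_add _ _ hY hY'), S.bracket_add_left Y Y' X hY hY' hX,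
    S.bracket_antisymm Y X hY hX, S.bracket_antisymm Y' X hY' hX, neg_add, neg_neg, neg_neg]

lemma bracket_fsmul_left (hf : S.IsFn f) (hX : S.IsVF X) (hY : S.IsVF Y) :
    S.bracket (fun p => f p • X p) Y
      = (fun p => f p • S.bracket X Y p) - fun p => S.D Y f p • X p := by
  rw [S.bracket_antisymm _ Y (S.vf_smul f X hf hX) hY, S.bracket_leibniz Y f X hY hf hX,
    S.bracket_antisymm Y X hY hX]
  ext p; simp only [Pi.add_apply, Pi.sub_apply, Pi.neg_apply, smul_neg]; abel


lemma K_metric (hX : S.IsVF X) (hY : S.IsVF Y) (hZ : S.IsVF Z) :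
    S.K X Y Z + S.K X Z Y = S.D X (S.gf Y Z) := by
  rw [K, K, S.gf_comm Z Y, S.gf_comm Y X, S.gf_comm X Z, S.bracket_antisymm Z Y hZ hY,
    S.bracket_antisymm Y X hY hX, S.bracket_antisymm X Z hX hZ]
  ext p
  simp only [gf, Pi.add_apply, Pi.sub_apply, Pi.smul_apply, Pi.neg_apply, map_neg, smul_eq_mul]
  ring

lemma K_torsionFree (hX : S.IsVF X) (hY : S.IsVF Y) (hZ : S.IsVF Z) :
    S.K X Y Z - S.K Y X Z = S.gf (S.bracket X Y) Z := by
  rw [K, K, S.gf_comm X Z, S.gf_comm Z Y, S.gf_comm Y X, S.bracket_antisymm X Z hX hZ,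
    S.bracket_antisymm Z Y hZ hY, S.bracket_antisymm Y X hY hX, S.gf_comm (S.bracket X Y) Z]
  ext p
  simp only [gf, Pi.add_apply, Pi.sub_apply, Pi.smul_apply, Pi.neg_apply, map_neg, smul_eq_mul]
  ring

lemma K_add_left (hX : S.IsVF X) (hX' : S.IsVF X') (hY : S.IsVF Y) (hZ : S.IsVF Z) :
    S.K (X + X') Y Z = S.K X Y Z + S.K X' Y Z := by
  rw [K, K, K, S.D_add_vf X X' _ hX hX' (S.isFn_gf hY hZ), S.gf_add_right Z X X',
    S.D_add_fn Y _ _ hY (S.isFn_gf hZ hX) (S.isFn_gf hZ hX'), S.gf_add_left X X' Y,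
    S.D_add_fn Z _ _ hZ (S.isFn_gf hX hY) (S.isFn_gf hX' hY), S.gf_add_left X X',
    S.bracket_add_right hZ hX hX', S.gf_add_right Y, S.bracket_add_left X X' Y hX hX' hY,
    S.gf_add_right Z]
  ext p; simp only [Pi.add_apply, Pi.sub_apply, Pi.smul_apply, smul_eq_mul]; ring

/-- The derivatives of `f` coming from `Y⟨Z,fX⟩` and `Z⟨fX,Y⟩` cancel against those coming
from the brackets `[Z,fX]` and `[fX,Y]`. -/
lemma K_fsmul_left (hf : S.IsFn f) (hX : S.IsVF X) (hY : S.IsVF Y) (hZ : S.IsVF Z) :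
    S.K (fun p => f p • X p) Y Z = f * S.K X Y Z := by
  have hXYZ : S.D (fun p => f p • X p) (S.gf Y Z) = f * S.D X (S.gf Y Z) :=
    S.D_smul_vf f X _ hf hX (S.isFn_gf hY hZ)
  have hYZX : S.D Y (S.gf Z fun p => f p • X p)
      = S.D Y f * S.gf Z X + f * S.D Y (S.gf Z X) := by
    rw [S.gf_fsmul_right, S.D_mul_fn Y f _ hY hf (S.isFn_gf hZ hX)]
  have hZXY : S.D Z (S.gf (fun p => f p • X p) Y)
      = S.D Z f * S.gf X Y + f * S.D Z (S.gf X Y) := by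
    rw [S.gf_fsmul_left, S.D_mul_fn Z f _ hZ hf (S.isFn_gf hX hY)]
  have hZX : S.gf Y (S.bracket Z fun p => f p • X p)
      = f * S.gf Y (S.bracket Z X) + S.D Z f * S.gf X Y := by
    rw [S.bracket_leibniz Z f X hZ hf hX, S.gf_add_right, S.gf_fsmul_right, S.gf_fsmul_right,
      S.gf_comm Y X]
  have hXY : S.gf Z (S.bracket (fun p => f p • X p) Y)
      = f * S.gf Z (S.bracket X Y) - S.D Y f * S.gf Z X := by
    rw [S.bracket_fsmul_left hf hX hY]
    ext p; simp only [gf, Pi.sub_apply, Pi.mul_apply, map_sub, map_smul, smul_eq_mul]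
  rw [K, K, hXYZ, hYZX, hZXY, S.gf_fsmul_left, hZX, hXY]
  ext p; simp only [Pi.add_apply, Pi.sub_apply, Pi.mul_apply, Pi.smul_apply, smul_eq_mul]; ring

lemma K_add_mid (hX : S.IsVF X) (hY : S.IsVF Y) (hY' : S.IsVF Y') (hZ : S.IsVF Z) :
    S.K X (Y + Y') Z = S.K X Y Z + S.K X Y' Z := by
  have hbr : S.gf (S.bracket X (Y + Y')) Z = S.gf (S.bracket X Y) Z + S.gf (S.bracket X Y') Z := by
    rw [S.bracket_add_right hX hY hY', S.gf_add_left]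
  linear_combination S.K_torsionFree hX (S.vf_add _ _ hY hY') hZ + S.K_add_left hY hY' hX hZ
    - S.K_torsionFree hX hY hZ - S.K_torsionFree hX hY' hZ + hbr

lemma K_fsmul_mid (hf : S.IsFn f) (hX : S.IsVF X) (hY : S.IsVF Y) (hZ : S.IsVF Z) :
    S.K X (fun p => f p • Y p) Z = f * S.K X Y Z + S.D X f * S.gf Y Z := by
  have hbr : S.gf (S.bracket X fun p => f p • Y p) Z
      = f * S.gf (S.bracket X Y) Z + S.D X f * S.gf Y Z := by
    rw [S.bracket_leibniz X f Y hX hf hY, S.gf_add_left, S.gf_fsmul_left, S.gf_fsmul_left]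
  linear_combination S.K_torsionFree hX (S.vf_smul f Y hf hY) hZ + S.K_fsmul_left hf hY hX hZ
    - f * S.K_torsionFree hX hY hZ + hbr

lemma K_add_right (hX : S.IsVF X) (hY : S.IsVF Y) (hZ : S.IsVF Z) (hZ' : S.IsVF Z') :
    S.K X Y (Z + Z') = S.K X Y Z + S.K X Y Z' := by
  have hD : S.D X (S.gf Y (Z + Z')) = S.D X (S.gf Y Z) + S.D X (S.gf Y Z') := by
    rw [S.gf_add_right, S.D_add_fn X _ _ hX (S.isFn_gf hY hZ) (S.isFn_gf hY hZ')]
  linear_combination S.K_metric hX hY (S.vf_add _ _ hZ hZ') - S.K_add_mid hX hZ hZ' hY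
    - S.K_metric hX hY hZ - S.K_metric hX hY hZ' + hD

lemma K_fsmul_right (hf : S.IsFn f) (hX : S.IsVF X) (hY : S.IsVF Y) (hZ : S.IsVF Z) :
    S.K X Y (fun p => f p • Z p) = f * S.K X Y Z := by
  have hD : S.D X (S.gf Y fun p => f p • Z p) = S.D X f * S.gf Y Z + f * S.D X (S.gf Y Z) := by
    rw [S.gf_fsmul_right, S.D_mul_fn X f _ hX hf (S.isFn_gf hY hZ)]
  linear_combination S.K_metric hX hY (S.vf_smul f Z hf hZ) - S.K_fsmul_mid hf hX hZ hY
    - f * S.K_metric hX hY hZ + hD + S.D X f * S.gf_comm Y Z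

variable {J : ∀ p, T p →ₗ[ℝ] T p}

lemma Jv_add (X Y : ∀ p, T p) : Jv J (X + Y) = Jv J X + Jv J Y := by
  ext p; simp [Jv]

lemma Jv_fsmul (f : M → ℝ) (X : ∀ p, T p) :
    Jv J (fun p => f p • X p) = fun p => f p • Jv J X p := by
  ext p; simp [Jv]

variable {S}

lemma IsAlmostProduct.gf_Jv_Jv (hJ : S.IsAlmostProduct J) (X Y : ∀ p, T p) :
    S.gf (Jv J X) (Jv J Y) = S.gf X Y :=
  funext fun p => hJ.compat p _ _

lemma IsAlmostProduct.Jv_Jv (hJ : S.IsAlmostProduct J) (X : ∀ p, T p) : Jv J (Jv J X) = X :=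
  funext fun p => hJ.invol p _

lemma Ktilde_add_left (hJ : S.IsAlmostProduct J)
    (hX : S.IsVF X) (hX' : S.IsVF X') (hY : S.IsVF Y) (hZ : S.IsVF Z) :
    S.Ktilde J (X + X') Y Z = S.Ktilde J X Y Z + S.Ktilde J X' Y Z := by
  rw [Ktilde, Ktilde, Ktilde, S.K_add_left hX hX' hY hZ,
    S.K_add_left hX hX' (hJ.smooth Y hY) (hJ.smooth Z hZ)]
  module

lemma Ktilde_add_mid (hJ : S.IsAlmostProduct J)
    (hX : S.IsVF X) (hY : S.IsVF Y) (hY' : S.IsVF Y') (hZ : S.IsVF Z) :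
    S.Ktilde J X (Y + Y') Z = S.Ktilde J X Y Z + S.Ktilde J X Y' Z := by
  rw [Ktilde, Ktilde, Ktilde, Jv_add, S.K_add_mid hX hY hY' hZ,
    S.K_add_mid hX (hJ.smooth Y hY) (hJ.smooth Y' hY') (hJ.smooth Z hZ)]
  module

lemma Ktilde_add_right (hJ : S.IsAlmostProduct J)
    (hX : S.IsVF X) (hY : S.IsVF Y) (hZ : S.IsVF Z) (hZ' : S.IsVF Z') :
    S.Ktilde J X Y (Z + Z') = S.Ktilde J X Y Z + S.Ktilde J X Y Z' := by
  rw [Ktilde, Ktilde, Ktilde, Jv_add, S.K_add_right hX hY hZ hZ',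
    S.K_add_right hX (hJ.smooth Y hY) (hJ.smooth Z hZ) (hJ.smooth Z' hZ')]
  module

lemma Ktilde_fsmul_left (hJ : S.IsAlmostProduct J)
    (hf : S.IsFn f) (hX : S.IsVF X) (hY : S.IsVF Y) (hZ : S.IsVF Z) :
    S.Ktilde J (fun p => f p • X p) Y Z = f * S.Ktilde J X Y Z := by
  rw [Ktilde, Ktilde, S.K_fsmul_left hf hX hY hZ,
    S.K_fsmul_left hf hX (hJ.smooth Y hY) (hJ.smooth Z hZ), mul_smul_comm, mul_add]

lemma Ktilde_fsmul_mid (hJ : S.IsAlmostProduct J)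
    (hf : S.IsFn f) (hX : S.IsVF X) (hY : S.IsVF Y) (hZ : S.IsVF Z) :
    S.Ktilde J X (fun p => f p • Y p) Z = f * S.Ktilde J X Y Z + S.D X f * S.gf Y Z := by
  rw [Ktilde, Ktilde, Jv_fsmul, S.K_fsmul_mid hf hX hY hZ,
    S.K_fsmul_mid hf hX (hJ.smooth Y hY) (hJ.smooth Z hZ), hJ.gf_Jv_Jv]
  ext p; simp only [Pi.add_apply, Pi.mul_apply, Pi.smul_apply, smul_eq_mul]; ring

lemma Ktilde_fsmul_right (hJ : S.IsAlmostProduct J)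
    (hf : S.IsFn f) (hX : S.IsVF X) (hY : S.IsVF Y) (hZ : S.IsVF Z) :
    S.Ktilde J X Y (fun p => f p • Z p) = f * S.Ktilde J X Y Z := by
  rw [Ktilde, Ktilde, Jv_fsmul, S.K_fsmul_right hf hX hY hZ,
    S.K_fsmul_right hf hX (hJ.smooth Y hY) (hJ.smooth Z hZ), mul_smul_comm, mul_add]

lemma Ktilde_smul_left (hJ : S.IsAlmostProduct J) (r : ℝ)
    (hX : S.IsVF X) (hY : S.IsVF Y) (hZ : S.IsVF Z) :
    S.Ktilde J (r • X) Y Z = r • S.Ktilde J X Y Z :=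
  S.Ktilde_fsmul_left hJ (S.fn_const r) hX hY hZ

lemma Ktilde_smul_mid (hJ : S.IsAlmostProduct J) (r : ℝ)
    (hX : S.IsVF X) (hY : S.IsVF Y) (hZ : S.IsVF Z) :
    S.Ktilde J X (r • Y) Z = r • S.Ktilde J X Y Z := by
  have h := S.Ktilde_fsmul_mid hJ (S.fn_const r) hX hY hZ
  rwa [S.D_const X r hX, zero_mul, add_zero] at h

lemma Ktilde_smul_right (hJ : S.IsAlmostProduct J) (r : ℝ)
    (hX : S.IsVF X) (hY : S.IsVF Y) (hZ : S.IsVF Z) :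
    S.Ktilde J X Y (r • Z) = r • S.Ktilde J X Y Z :=
  S.Ktilde_fsmul_right hJ (S.fn_const r) hX hY hZ

lemma Ktilde_metric (hJ : S.IsAlmostProduct J) (hX : S.IsVF X) (hY : S.IsVF Y) (hZ : S.IsVF Z) :
    S.Ktilde J X Y Z + S.Ktilde J X Z Y = S.D X (S.gf Y Z) := by
  have hJYZ := S.K_metric hX (hJ.smooth Y hY) (hJ.smooth Z hZ)
  rw [hJ.gf_Jv_Jv] at hJYZ
  rw [Ktilde, Ktilde]
  linear_combination (norm := module) (1 / 2 : ℝ) • (S.K_metric hX hY hZ + hJYZ)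

lemma Ktilde_sub_swap (hX : S.IsVF X) (hY : S.IsVF Y) (hZ : S.IsVF Z) :
    S.Ktilde J X Y Z - S.Ktilde J Y X Z = (1 / 2 : ℝ) • S.gf (S.bracket X Y) Z
      + (1 / 2 : ℝ) • (S.K X (Jv J Y) (Jv J Z) - S.K Y (Jv J X) (Jv J Z)) := by
  rw [Ktilde, Ktilde]
  linear_combination (norm := module) (1 / 2 : ℝ) • S.K_torsionFree hX hY hZ

lemma Ktilde_Jv_Jv (hJ : S.IsAlmostProduct J) (X Y Z : ∀ p, T p) :
    S.Ktilde J X (Jv J Y) (Jv J Z) = S.Ktilde J X Y Z := by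
  rw [Ktilde, Ktilde, hJ.Jv_Jv, hJ.Jv_Jv, add_comm]

end SSRM

/-- Theorem 4.3: properties of the almost product Koszul form `K̃`
of an almost product singular semi-Riemannian manifold `(M,g,J)`. -/
theorem almostProductKoszul_properties
    {M : Type*} {T : M → Type*} [∀ p, AddCommGroup (T p)] [∀ p, Module ℝ (T p)]
    (S : SSRM M T) (J : ∀ p, T p →ₗ[ℝ] T p) (hJ : S.IsAlmostProduct J)
    (X Y Z : ∀ p, T p) (hX : S.IsVF X) (hY : S.IsVF Y) (hZ : S.IsVF Z)
    (f : M → ℝ) (hf : S.IsFn f) :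
    -- (1) additivity and ℝ-linearity in each of the three arguments
    (∀ X', S.IsVF X' → S.Ktilde J (X + X') Y Z = S.Ktilde J X Y Z + S.Ktilde J X' Y Z) ∧
    (∀ Y', S.IsVF Y' → S.Ktilde J X (Y + Y') Z = S.Ktilde J X Y Z + S.Ktilde J X Y' Z) ∧
    (∀ Z', S.IsVF Z' → S.Ktilde J X Y (Z + Z') = S.Ktilde J X Y Z + S.Ktilde J X Y Z') ∧
    (∀ r : ℝ, S.Ktilde J (r • X) Y Z = r • S.Ktilde J X Y Z) ∧
    (∀ r : ℝ, S.Ktilde J X (r • Y) Z = r • S.Ktilde J X Y Z) ∧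
    (∀ r : ℝ, S.Ktilde J X Y (r • Z) = r • S.Ktilde J X Y Z) ∧
    -- (2) `K̃(fX,Y,Z) = f·K̃(X,Y,Z)`
    S.Ktilde J (fun p => f p • X p) Y Z = f * S.Ktilde J X Y Z ∧
    -- (3) `K̃(X,fY,Z) = f·K̃(X,Y,Z) + X(f)⟨Y,Z⟩`
    S.Ktilde J X (fun p => f p • Y p) Z = f * S.Ktilde J X Y Z + S.D X f * S.gf Y Z ∧
    -- (4) `K̃(X,Y,fZ) = f·K̃(X,Y,Z)`
    S.Ktilde J X Y (fun p => f p • Z p) = f * S.Ktilde J X Y Z ∧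
    -- (5) `K̃(X,Y,Z) + K̃(X,Z,Y) = X⟨Y,Z⟩`
    S.Ktilde J X Y Z + S.Ktilde J X Z Y = S.D X (S.gf Y Z) ∧
    -- (6) `K̃(X,Y,Z) − K̃(Y,X,Z) = (1/2)⟨[X,Y],Z⟩ + (1/2)[K(X,JY,JZ) − K(Y,JX,JZ)]`
    S.Ktilde J X Y Z - S.Ktilde J Y X Z
      = ((1 : ℝ) / 2) • S.gf (S.bracket X Y) Z
        + ((1 : ℝ) / 2) • (S.K X (SSRM.Jv J Y) (SSRM.Jv J Z)
            - S.K Y (SSRM.Jv J X) (SSRM.Jv J Z)) ∧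
    -- (7) `K̃(X,JY,JZ) = K̃(X,Y,Z)`
    S.Ktilde J X (SSRM.Jv J Y) (SSRM.Jv J Z) = S.Ktilde J X Y Z := by
  exact ⟨fun X' hX' => S.Ktilde_add_left hJ hX hX' hY hZ,
    fun Y' hY' => S.Ktilde_add_mid hJ hX hY hY' hZ,
    fun Z' hZ' => S.Ktilde_add_right hJ hX hY hZ hZ',
    fun r => S.Ktilde_smul_left hJ r hX hY hZ,
    fun r => S.Ktilde_smul_mid hJ r hX hY hZ,
    fun r => S.Ktilde_smul_right hJ r hX hY hZ,
    S.Ktilde_fsmul_left hJ hf hX hY hZ,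
    S.Ktilde_fsmul_mid hJ hf hX hY hZ,
    S.Ktilde_fsmul_right hJ hf hX hY hZ,
    S.Ktilde_metric hJ hX hY hZ,
    S.Ktilde_sub_swap hX hY hZ,
    S.Ktilde_Jv_Jv hJ X Y Z⟩
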